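/- arXiv:1912.12212 — 2 statements merged into one kernel-verified Lean document; each statement's English description precedes it below -/
import Mathlib

section
/- Let M ∈ ℂ^{n×n}, let e, f be real scalars with e·f ≠ 1, and suppose the Stein displacement of M factors as Δ_{Z_e,Z_f}[M] = G·Hᵀ where G = [g_1 … g_r] and H = [h_1 … h_r] are n×r complex matrices with columns g_j and h_j. Then M = (1/(1 − e·f)) · Σ_{j=1}^{r} Z_e(g_j) · (Z_f(J·h_j))ᵀ · J. -/
open Matrix

/-- The `n × n` unit `f`-circulant matrix `Z_f`: entries `(Z_f)_{i,k} = 1` if `i = k+1`,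
`(Z_f)_{0,n−1} = f`, and `0` otherwise. -/
noncomputable def Zf (n : ℕ) (f : ℝ) : Matrix (Fin n) (Fin n) ℂ :=
  Matrix.of fun i k =>
    if (i : ℕ) = (k : ℕ) + 1 then 1
    else if (i : ℕ) = 0 ∧ (k : ℕ) = n - 1 then (f : ℂ)
    else 0

/-- The `n × n` reversal matrix `J`: entries `J_{i,k} = 1` if `i + k = n − 1`, else `0`. -/
noncomputable def Jrev (n : ℕ) : Matrix (Fin n) (Fin n) ℂ :=
  Matrix.of fun i k => if (i : ℕ) + (k : ℕ) = n - 1 then 1 else 0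

/-- The `f`-circulant matrix `Z_f(v)` generated by a vector `v ∈ ℂ^n`:
`(Z_f(v))_{i,k} = v_{i−k}` if `i ≥ k`, and `(Z_f(v))_{i,k} = f · v_{n+i−k}` if `i < k`. -/
noncomputable def ZfVec (n : ℕ) (f : ℝ) (v : Fin n → ℂ) : Matrix (Fin n) (Fin n) ℂ :=
  Matrix.of fun i k =>
    (if (k : ℕ) ≤ (i : ℕ) then 1 else (f : ℂ)) *
      v ⟨((i : ℕ) + n - (k : ℕ)) % n, Nat.mod_lt _ i.pos⟩

/-!
Telescoping the Stein identity `M - Z_e M Z_f = G Hᵀ` against powers gives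
`∑_{k<n} Z_e^k G Hᵀ Z_f^k = M - Z_e^n M Z_f^n = (1 - e f) M`, since `Z_f^n = f I`.
On the other side, the `k`-th column of `Z_f(v)` is `Z_f^k v` and `J Z_f^k J = (Z_f^k)ᵀ`
(`Z_f` is persymmetric), so `Z_e(g) Z_f(J h)ᵀ J = ∑_{k<n} Z_e^k g hᵀ Z_f^k`; summing over the
columns of `G` and `H` recovers the telescoped sum.
-/

section Stein

variable {R : Type*} [Ring R]

def steinDisplacement (A B M : R) : R := M - A * M * B

theorem sum_range_pow_mul_steinDisplacement_mul_pow (A B M : R) (n : ℕ) :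
    ∑ k ∈ Finset.range n, A ^ k * steinDisplacement A B M * B ^ k = M - A ^ n * M * B ^ n := by
  have hterm : ∀ k, A ^ k * steinDisplacement A B M * B ^ k
      = A ^ k * M * B ^ k - A ^ (k + 1) * M * B ^ (k + 1) := fun k => by
    rw [steinDisplacement, mul_sub, sub_mul, pow_succ, pow_succ']
    simp only [mul_assoc]
  simp only [hterm, Finset.sum_range_sub', pow_zero, one_mul, mul_one]

theorem eq_smul_sum_range_pow_mul_steinDisplacement_mul_pow {𝕜 : Type*} [Field 𝕜] [Algebra 𝕜 R]
    {A B : R} {a b : 𝕜} {n : ℕ} (hA : A ^ n = a • 1) (hB : B ^ n = b • 1) (hab : a * b ≠ 1)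
    (M : R) :
    M = (1 / (1 - a * b)) • ∑ k ∈ Finset.range n, A ^ k * steinDisplacement A B M * B ^ k := by
  have hunit : 1 - a * b ≠ 0 := sub_ne_zero.mpr (Ne.symm hab)
  rw [sum_range_pow_mul_steinDisplacement_mul_pow, hA, hB, smul_mul_assoc, one_mul,
    mul_smul_comm, mul_one, smul_smul, mul_comm b, ← one_smul 𝕜 M, smul_smul, mul_one,
    ← sub_smul, smul_smul, one_div, inv_mul_cancel₀ hunit, one_smul]

end Stein

theorem Matrix.mul_transpose_eq_sum_vecMulVec {l m o α : Type*} [Fintype l]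
    [NonUnitalNonAssocSemiring α] (X : Matrix m l α) (Y : Matrix o l α) :
    X * Yᵀ = ∑ k, vecMulVec (Xᵀ k) (Yᵀ k) := by
  ext i j
  simp [mul_apply, Matrix.sum_apply, vecMulVec_apply]

section Circulant

variable {n : ℕ}

theorem Jrev_eq_permMatrix : Jrev n = Fin.revPerm.permMatrix ℂ := by
  ext i k
  simp only [Jrev, of_apply, PEquiv.toMatrix_apply, Equiv.toPEquiv_apply, Option.mem_def,
    Option.some.injEq, Fin.revPerm_apply, Fin.ext_iff, Fin.val_rev]
  have := i.2
  congr 1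
  exact propext (by omega)

theorem Jrev_mul_mul_Jrev (X : Matrix (Fin n) (Fin n) ℂ) :
    Jrev n * X * Jrev n = X.submatrix Fin.rev Fin.rev := by
  rw [Jrev_eq_permMatrix, PEquiv.toMatrix_toPEquiv_mul, PEquiv.mul_toMatrix_toPEquiv,
    submatrix_submatrix]
  rfl

theorem vecMul_Jrev (v : Fin n → ℂ) : v ᵥ* Jrev n = Jrev n *ᵥ v := by
  rw [Jrev_eq_permMatrix, vecMul_permMatrix, permMatrix_mulVec, Fin.revPerm_symm]

theorem Zf_submatrix_rev (f : ℝ) : (Zf n f).submatrix Fin.rev Fin.rev = (Zf n f)ᵀ := by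
  ext i k
  have := i.2
  have := k.2
  simp only [Zf, submatrix_apply, transpose_apply, of_apply, Fin.val_rev]
  split_ifs <;> first | rfl | omega

theorem Zf_pow_submatrix_rev (f : ℝ) (k : ℕ) :
    (Zf n f ^ k).submatrix Fin.rev Fin.rev = (Zf n f ^ k)ᵀ := by
  have h := map_pow (reindexAlgEquiv ℂ ℂ Fin.revPerm) (Zf n f) k
  simp only [coe_reindexAlgEquiv, reindex_apply, Fin.revPerm_symm] at h
  rw [transpose_pow, ← Zf_submatrix_rev]
  exact h

theorem Zf_mulVec_apply (f : ℝ) (v : Fin n → ℂ) (i : Fin n) :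
    (Zf n f *ᵥ v) i = if h : 1 ≤ (i : ℕ) then v ⟨i - 1, by omega⟩
      else f * v ⟨i + n - 1, by omega⟩ := by
  split_ifs with h
  · rw [mulVec, dotProduct, Fintype.sum_eq_single ⟨i - 1, by omega⟩]
    · simp only [Zf, of_apply]
      rw [if_pos (by omega), one_mul]
    · intro k hk
      have : (k : ℕ) ≠ i - 1 := fun h' => hk (Fin.ext h')
      simp only [Zf, of_apply]
      rw [if_neg (by omega), if_neg (by omega), zero_mul]
  · rw [mulVec, dotProduct, Fintype.sum_eq_single ⟨i + n - 1, by omega⟩]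
    · simp only [Zf, of_apply]
      rw [if_neg (by omega), if_pos (by omega)]
    · intro k hk
      have : (k : ℕ) ≠ i + n - 1 := fun h' => hk (Fin.ext h')
      simp only [Zf, of_apply]
      rw [if_neg (by omega), if_neg (by omega), zero_mul]

theorem Zf_pow_mulVec_apply (f : ℝ) (v : Fin n → ℂ) {k : ℕ} (hk : k ≤ n) (i : Fin n) :
    (Zf n f ^ k *ᵥ v) i = if h : k ≤ (i : ℕ) then v ⟨i - k, by omega⟩
      else f * v ⟨i + n - k, by omega⟩ := by
  induction k generalizing i with
  | zero => simp
  | succ k ih =>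
    rw [pow_succ', ← mulVec_mulVec, Zf_mulVec_apply]
    simp only [ih (Nat.le_of_succ_le hk)]
    split_ifs <;> first | omega | (congr 2; omega) | (congr 3; omega)

theorem transpose_ZfVec_apply (f : ℝ) (v : Fin n → ℂ) (k : Fin n) :
    (ZfVec n f v)ᵀ k = Zf n f ^ (k : ℕ) *ᵥ v := by
  ext i
  rw [Zf_pow_mulVec_apply f v k.2.le, transpose_apply, ZfVec, of_apply]
  split_ifs with h
  · rw [one_mul]
    congr 2
    rw [show (i : ℕ) + n - k = i - k + n by omega, Nat.add_mod_right]
    exact Nat.mod_eq_of_lt (by omega)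
  · exact congrArg (fun j => _ * v j) (Fin.ext (Nat.mod_eq_of_lt (by omega)))

theorem Zf_pow_self (f : ℝ) : Zf n f ^ n = (f : ℂ) • 1 := by
  refine mulVec_injective (funext fun v => funext fun i => ?_)
  rw [Zf_pow_mulVec_apply f v le_rfl, dif_neg (by omega), smul_mulVec, one_mulVec,
    Pi.smul_apply, smul_eq_mul]
  congr 2
  exact Fin.ext (Nat.add_sub_cancel _ _)

theorem Jrev_mul_Zf_pow_mul_Jrev (f : ℝ) (k : ℕ) :
    Jrev n * Zf n f ^ k * Jrev n = (Zf n f ^ k)ᵀ := by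
  rw [Jrev_mul_mul_Jrev, Zf_pow_submatrix_rev]

theorem ZfVec_mul_transpose_mul_Jrev (e f : ℝ) (g h : Fin n → ℂ) :
    ZfVec n e g * (ZfVec n f (Jrev n *ᵥ h))ᵀ * Jrev n
      = ∑ k ∈ Finset.range n, Zf n e ^ k * vecMulVec g h * Zf n f ^ k := by
  rw [mul_transpose_eq_sum_vecMulVec, Finset.sum_mul,
    ← Fin.sum_univ_eq_sum_range (fun k => Zf n e ^ k * vecMulVec g h * Zf n f ^ k)]
  refine Finset.sum_congr rfl fun k _ => ?_
  rw [transpose_ZfVec_apply, transpose_ZfVec_apply, vecMulVec_mul, mul_vecMulVec, vecMulVec_mul,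
    vecMul_Jrev, mulVec_mulVec, mulVec_mulVec, Jrev_mul_Zf_pow_mul_Jrev,
    mulVec_transpose]

end Circulant

/-- Stein-type displacement inversion: if Δ_{Z_e,Z_f}[M] = G·Hᵀ with e·f ≠ 1, then
M = (1/(1 − e·f)) · Σ_{j=1}^{r} Z_e(g_j) · (Z_f(J·h_j))ᵀ · J. -/
theorem stein_rank_decomposition (n r : ℕ) (M : Matrix (Fin n) (Fin n) ℂ) (e f : ℝ)
    (hef : e * f ≠ 1) (G H : Matrix (Fin n) (Fin r) ℂ)
    (hM : M - Zf n e * M * Zf n f = G * Hᵀ) :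
    M = (1 / (1 - (e : ℂ) * (f : ℂ))) •
      ∑ j : Fin r,
        ZfVec n e (fun i => G i j) *
          (ZfVec n f ((Jrev n).mulVec fun i => H i j))ᵀ * Jrev n := by
  have hef' : (e : ℂ) * f ≠ 1 := by exact_mod_cast hef
  rw [eq_smul_sum_range_pow_mul_steinDisplacement_mul_pow (Zf_pow_self e) (Zf_pow_self f) hef' M,
    steinDisplacement, hM]
  simp only [ZfVec_mul_transpose_mul_Jrev]
  rw [mul_transpose_eq_sum_vecMulVec]
  simp only [Finset.mul_sum, Finset.sum_mul]
  exact congrArg _ Finset.sum_comm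
end

section
/- Let M ∈ ℂ^{n×n} with entries m_{i,k} (indices 0,…,n−1), and define m̃_{i,k} = m_{(i−1) mod n, k} − (−1)^{g(k)} · m_{i, (k+1) mod n}, i.e., m̃_{i,k} is the (i,k) entry of the Sylvester displacement ∇_{Z_1,Z_{−1}}[M]. Then M admits the decomposition M = (1/2) · Σ_{i=0}^{n−1} Σ_{k=0}^{n−1} m̃_{i,k} · Z_1^i · Z_{−1}^{n−1−k}. -/
open Matrix

/-- g(k) = 0 for 0 ≤ k ≤ n−2 and g(n−1) = 1. -/
def gfun (n k : ℕ) : ℕ := if k = n - 1 then 1 else 0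

/-!
For `∇ = ∇_{Z_f, Z_g}`, telescoping gives `∑_{j<n} Z_f^j ∇[M] Z_g^(n-1-j) = Z_f^n M - M Z_g^n`,
which is `(f - g) M` because `Z_f^n = f I`. Expanding `∇[M]` in matrix units, each
`E_{ik} = Z_f^i E_{0,n-1} Z_g^(n-1-k)`, and powers of `Z_f` (resp. `Z_g`) commute, so the
telescoped sum of `E_{ik}` is `Z_f^i (∑_j E_{jj}) Z_g^(n-1-k) = Z_f^i Z_g^(n-1-k)`.
Take `f = 1`, `g = -1`.
-/

open Finset

def sylvesterDisplacement {R : Type*} [Ring R] (A B X : R) : R := A * X - X * B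

theorem sum_range_pow_mul_sylvesterDisplacement_mul_pow {R : Type*} [Ring R] (A B X : R)
    (n : ℕ) :
    ∑ j ∈ range n, A ^ j * sylvesterDisplacement A B X * B ^ (n - 1 - j) =
      A ^ n * X - X * B ^ n := by
  have step : ∀ j ∈ range n, A ^ j * sylvesterDisplacement A B X * B ^ (n - 1 - j) =
      A ^ (j + 1) * X * B ^ (n - (j + 1)) - A ^ j * X * B ^ (n - j) := by
    intro j hj
    obtain ⟨m, rfl⟩ : ∃ m, n = j + 1 + m := ⟨n - (j + 1), by have := mem_range.mp hj; omega⟩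
    rw [show j + 1 + m - 1 - j = m by omega, show j + 1 + m - (j + 1) = m by omega,
      show j + 1 + m - j = m + 1 by omega, pow_succ, pow_succ', sylvesterDisplacement]
    noncomm_ring
  rw [sum_congr rfl step, sum_range_sub (fun j => A ^ j * X * B ^ (n - j))]
  simp

theorem Nat.add_sub_one_mod_eq_ite {i m : ℕ} (h : i < m) :
    (i + m - 1) % m = if i = 0 then m - 1 else i - 1 := by
  split_ifs with hi
  · subst hi; rw [zero_add, Nat.mod_eq_of_lt (by omega)]
  · rw [show i + m - 1 = i - 1 + m by omega, Nat.add_mod_right, Nat.mod_eq_of_lt (by omega)]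

theorem Nat.add_one_mod_eq_ite {k m : ℕ} (h : k < m) :
    (k + 1) % m = if k = m - 1 then 0 else k + 1 := by
  split_ifs with hk
  · rw [show k + 1 = m by omega, Nat.mod_self]
  · exact Nat.mod_eq_of_lt (by omega)

section Circulant

variable {n : ℕ} (f : ℝ)

theorem Zf_mul_single {i j : Fin n} (h : (j : ℕ) = i + 1) (c : Fin n) (x : ℂ) :
    Zf n f * single i c x = single j c x := by
  ext a b
  by_cases hb : b = c
  · subst hb
    simp only [mul_single_apply_same, Zf, of_apply, single_apply, Fin.ext_iff, and_true]
    split_ifs <;> first | omega | simp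
  · simp [hb, Ne.symm hb]

theorem Zf_mul_single_last {i j : Fin n} (hi : (i : ℕ) = n - 1) (hj : (j : ℕ) = 0) (c : Fin n)
    (x : ℂ) : Zf n f * single i c x = (f : ℂ) • single j c x := by
  ext a b
  by_cases hb : b = c
  · subst hb
    simp only [mul_single_apply_same, Zf, of_apply, Matrix.smul_apply, single_apply, Fin.ext_iff,
      and_true, smul_eq_mul]
    split_ifs <;> first | omega | simp
  · simp [hb, Ne.symm hb]

theorem single_mul_Zf {k l : Fin n} (h : (k : ℕ) = l + 1) (r : Fin n) (x : ℂ) :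
    single r k x * Zf n f = single r l x := by
  ext a b
  by_cases ha : a = r
  · subst ha
    simp only [single_mul_apply_same, Zf, of_apply, single_apply, Fin.ext_iff, true_and]
    split_ifs <;> first | omega | simp
  · simp [ha, Ne.symm ha]

theorem Zf_pow_mul_single (m : ℕ) {i j : Fin n} (h : (j : ℕ) = i + m) (c : Fin n) (x : ℂ) :
    Zf n f ^ m * single i c x = single j c x := by
  induction m generalizing j with
  | zero => simp [Fin.ext h]
  | succ m ih =>
    rw [pow_succ', mul_assoc, ih (j := ⟨i + m, by omega⟩) rfl, Zf_mul_single f (by simp; omega)]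

theorem single_mul_Zf_pow (m : ℕ) {k l : Fin n} (h : (k : ℕ) = l + m) (r : Fin n) (x : ℂ) :
    single r k x * Zf n f ^ m = single r l x := by
  induction m generalizing k with
  | zero => simp [Fin.ext h]
  | succ m ih =>
    rw [pow_succ', ← mul_assoc, single_mul_Zf f (l := ⟨l + m, by omega⟩) (by simp; omega),
      ih rfl]

theorem Zf_pow_eq_smul_one : Zf n f ^ n = (f : ℂ) • 1 := by
  have hcol : ∀ b : Fin n, Zf n f ^ n * single b b 1 = (f : ℂ) • single b b 1 := by
    intro b
    let last : Fin n := ⟨n - 1, Nat.sub_one_lt_of_lt b.isLt⟩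
    calc Zf n f ^ n * single b b 1
        = Zf n f ^ (b : ℕ) * (Zf n f * (Zf n f ^ (n - 1 - b) * single b b 1)) := by
          rw [← mul_assoc, ← mul_assoc, ← pow_succ, ← pow_add,
            show (b : ℕ) + 1 + (n - 1 - b) = n by omega]
      _ = Zf n f ^ (b : ℕ) * (Zf n f * single last b 1) := by
          rw [Zf_pow_mul_single f _ (i := b) (j := last) (by simp only [last]; omega)]
      _ = Zf n f ^ (b : ℕ) * ((f : ℂ) • single ⟨0, b.pos⟩ b 1) := by
          rw [Zf_mul_single_last f (i := last) (j := ⟨0, b.pos⟩) rfl rfl]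
      _ = (f : ℂ) • single b b 1 := by
          rw [mul_smul_comm, Zf_pow_mul_single f _ (j := b) (by simp)]
  calc Zf n f ^ n = Zf n f ^ n * ∑ b : Fin n, single b b 1 := by rw [sum_single_one, mul_one]
    _ = ∑ b : Fin n, (f : ℂ) • single b b 1 := by
      rw [mul_sum]
      exact sum_congr rfl fun b _ => hcol b
    _ = (f : ℂ) • 1 := by rw [← smul_sum, sum_single_one]

theorem Zf_mul_apply {α : Type*} (M : Matrix (Fin n) α ℂ) (i : Fin n) (k : α) :
    (Zf n f * M) i k =
      (if (i : ℕ) = 0 then (f : ℂ) else 1) * M ⟨((i : ℕ) + n - 1) % n, Nat.mod_lt _ i.pos⟩ k := by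
  have hi := Nat.add_sub_one_mod_eq_ite i.isLt
  rw [mul_apply, sum_eq_single ⟨((i : ℕ) + n - 1) % n, Nat.mod_lt _ i.pos⟩]
  · simp only [Zf, of_apply, hi]
    split_ifs <;> first | omega | simp
  · intro j _ hj
    simp only [Ne, Fin.ext_iff, hi] at hj
    simp only [Zf, of_apply]
    split_ifs at hj <;> split_ifs <;> first | omega | simp
  · simp

theorem mul_Zf_apply {α : Type*} (M : Matrix α (Fin n) ℂ) (i : α) (k : Fin n) :
    (M * Zf n f) i k =
      (if (k : ℕ) = n - 1 then (f : ℂ) else 1) * M i ⟨((k : ℕ) + 1) % n, Nat.mod_lt _ k.pos⟩ := by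
  have hk := Nat.add_one_mod_eq_ite k.isLt
  rw [mul_apply, sum_eq_single ⟨((k : ℕ) + 1) % n, Nat.mod_lt _ k.pos⟩]
  · simp only [Zf, of_apply, hk]
    split_ifs at hk <;> split_ifs <;> first | omega | simp_all [mul_comm]
  · intro j _ hj
    simp only [Ne, Fin.ext_iff, hk] at hj
    simp only [Zf, of_apply]
    split_ifs at hj <;> split_ifs <;> first | omega | simp
  · simp

theorem sylvesterDisplacement_Zf_apply (M : Matrix (Fin n) (Fin n) ℂ) (i k : Fin n) :
    sylvesterDisplacement (Zf n 1) (Zf n (-1)) M i k =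
      M ⟨((i : ℕ) + n - 1) % n, Nat.mod_lt _ i.pos⟩ k -
        (-1 : ℂ) ^ gfun n (k : ℕ) * M i ⟨((k : ℕ) + 1) % n, Nat.mod_lt _ k.pos⟩ := by
  rw [sylvesterDisplacement, Matrix.sub_apply, Zf_mul_apply, mul_Zf_apply, gfun]
  split_ifs <;> simp

theorem sum_Zf_pow_mul_single_mul_Zf_pow (g : ℝ) (i k : Fin n) (x : ℂ) :
    ∑ j : Fin n, Zf n f ^ (j : ℕ) * single i k x * Zf n g ^ (n - 1 - j) =
      x • (Zf n f ^ (i : ℕ) * Zf n g ^ (n - 1 - k)) := by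
  let corner := single (⟨0, i.pos⟩ : Fin n) (⟨n - 1, Nat.sub_one_lt_of_lt i.isLt⟩ : Fin n) x
  have factor : ∀ r c : Fin n, single r c x = Zf n f ^ (r : ℕ) * corner * Zf n g ^ (n - 1 - c) := by
    intro r c
    rw [Zf_pow_mul_single f r (j := r) (by simp),
      single_mul_Zf_pow g (n - 1 - c) (l := c) (by simp; omega)]
  have swap : ∀ j : Fin n, Zf n f ^ (j : ℕ) * single i k x * Zf n g ^ (n - 1 - j) =
      Zf n f ^ (i : ℕ) * single j j x * Zf n g ^ (n - 1 - k) := by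
    intro j
    rw [factor i k, factor j j]
    simp only [← mul_assoc]
    rw [pow_mul_comm (Zf n f) j i]
    simp only [mul_assoc]
    rw [pow_mul_comm (Zf n g) (n - 1 - k)]
  rw [sum_congr rfl fun j _ => swap j, ← sum_mul, ← mul_sum, sum_single_eq_diagonal fun _ => x,
    ← smul_one_eq_diagonal, mul_smul_comm, mul_one, smul_mul_assoc]

theorem sum_Zf_pow_mul_sylvesterDisplacement_mul_Zf_pow (g : ℝ)
    (M : Matrix (Fin n) (Fin n) ℂ) :
    ∑ j : Fin n,
        Zf n f ^ (j : ℕ) * sylvesterDisplacement (Zf n f) (Zf n g) M * Zf n g ^ (n - 1 - j) =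
      ((f : ℂ) - g) • M := by
  rw [Fin.sum_univ_eq_sum_range
      (fun j => Zf n f ^ j * sylvesterDisplacement (Zf n f) (Zf n g) M * Zf n g ^ (n - 1 - j)),
    sum_range_pow_mul_sylvesterDisplacement_mul_pow, Zf_pow_eq_smul_one, Zf_pow_eq_smul_one,
    smul_mul_assoc, one_mul, mul_smul_comm, mul_one, sub_smul]

theorem sub_smul_eq_sum_sylvesterDisplacement_smul (g : ℝ) (M : Matrix (Fin n) (Fin n) ℂ) :
    ((f : ℂ) - g) • M =
      ∑ i : Fin n, ∑ k : Fin n, sylvesterDisplacement (Zf n f) (Zf n g) M i k •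
        (Zf n f ^ (i : ℕ) * Zf n g ^ (n - 1 - k)) := by
  rw [← sum_Zf_pow_mul_sylvesterDisplacement_mul_Zf_pow]
  conv_lhs => rw [matrix_eq_sum_single (sylvesterDisplacement (Zf n f) (Zf n g) M)]
  simp only [mul_sum, sum_mul]
  rw [sum_comm]
  refine sum_congr rfl fun i _ => ?_
  rw [sum_comm]
  exact sum_congr rfl fun k _ => sum_Zf_pow_mul_single_mul_Zf_pow f g i k _

end Circulant

/-- Sylvester-type LCU decomposition: with m-tilde_{i,k} the (i,k) entry of
∇_{Z_1,Z_{−1}}[M], M = (1/2) · Σ_{i,k} m-tilde_{i,k} · Z_1^i · Z_{−1}^{n−1−k}. -/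
theorem sylvester_LCU_decomposition (n : ℕ) (M : Matrix (Fin n) (Fin n) ℂ) :
    M = (1 / 2 : ℂ) •
      ∑ i : Fin n, ∑ k : Fin n,
        (M ⟨((i : ℕ) + n - 1) % n, Nat.mod_lt _ i.pos⟩ k -
            (-1 : ℂ) ^ gfun n (k : ℕ) *
              M i ⟨((k : ℕ) + 1) % n, Nat.mod_lt _ k.pos⟩) •
          (Zf n 1 ^ (i : ℕ) * Zf n (-1) ^ (n - 1 - (k : ℕ))) := by
  have h := sub_smul_eq_sum_sylvesterDisplacement_smul (1 : ℝ) (-1) M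
  simp only [sylvesterDisplacement_Zf_apply] at h
  rw [← h, smul_smul]
  norm_num
end
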